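/- arXiv:2207.02554 — 7 statements merged into one kernel-verified Lean document; each statement's English description precedes it below -/
import Mathlib

section
/- If ω is a θ-doubling nondecreasing positive weight, then its summing weight ω̃(m) = Σ_{n=1}^m ω(n)/n is (3θ/2)-doubling, i.e., ω̃(2n) ≤ (3θ/2)·ω̃(n) for all n ∈ ℕ. -/
lemma pair_sum (f : ℕ → ℝ) : ∀ n : ℕ,
    ∑ i ∈ Finset.Icc 1 (2 * n), f i = ∑ k ∈ Finset.Icc 1 n, (f (2 * k - 1) + f (2 * k)) := by
  intro n
  induction n with
  | zero => simp
  | succ n ih =>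
    have h1 : 2 * (n + 1) = (2 * n + 1) + 1 := by ring
    rw [h1, Finset.sum_Icc_succ_top (by omega), Finset.sum_Icc_succ_top (by omega),
      Finset.sum_Icc_succ_top (by omega : 1 ≤ n + 1), ih]
    have h2 : 2 * (n + 1) - 1 = 2 * n + 1 := by omega
    have h3 : 2 * (n + 1) = 2 * n + 1 + 1 := by omega
    rw [h2, h3]
    ring

/-- if ω is θ-doubling nondecreasing positive, then its summing weight
ω̃(m) = Σ_{n=1}^m ω(n)/n is (3θ/2)-doubling. -/
theorem stmt5 (ω : ℕ → ℝ) (hpos : ∀ n, 1 ≤ n → 0 < ω n)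
    (hmono : ∀ m n, 1 ≤ m → m ≤ n → ω m ≤ ω n)
    (θ : ℝ) (hθ : 1 ≤ θ) (hdoub : ∀ n, 1 ≤ n → ω (2 * n) ≤ θ * ω n) :
    ∀ n : ℕ, 1 ≤ n →
      (∑ i ∈ Finset.Icc 1 (2 * n), ω i / i) ≤
        (3 * θ / 2) * ∑ i ∈ Finset.Icc 1 n, ω i / i := by
  intro n hn
  rw [pair_sum (fun i => ω i / i) n, Finset.mul_sum]
  apply Finset.sum_le_sum
  intro k hk
  have hk1 : 1 ≤ k := (Finset.mem_Icc.mp hk).1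
  have hkpos : (0:ℝ) < (k:ℝ) := by exact_mod_cast hk1
  have hk1' : (1:ℝ) ≤ (k:ℝ) := by exact_mod_cast hk1
  have hωk : 0 < ω k := hpos k hk1
  have hθωk : ω (2 * k) ≤ θ * ω k := hdoub k hk1
  have hωodd : ω (2 * k - 1) ≤ θ * ω k :=
    le_trans (hmono (2 * k - 1) (2 * k) (by omega) (by omega)) hθωk
  have hc1 : ((2 * k - 1 : ℕ) : ℝ) = 2 * (k:ℝ) - 1 := by
    push_cast [Nat.cast_sub (by omega : 1 ≤ 2 * k)]; ring
  have hpos1 : (0:ℝ) < ((2 * k - 1 : ℕ) : ℝ) := by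
    rw [hc1]; linarith
  have hk2 : (0:ℝ) < ((2 * k : ℕ) : ℝ) := by positivity
  have h1 : ω (2 * k - 1) / ((2 * k - 1 : ℕ) : ℝ) ≤ θ * ω k / k := by
    apply div_le_div₀ (by positivity) hωodd hkpos
    rw [hc1]; linarith
  have h2 : ω (2 * k) / ((2 * k : ℕ) : ℝ) ≤ θ * ω k / (2 * k) := by
    have hcast : ((2 * k : ℕ) : ℝ) = 2 * (k:ℝ) := by push_cast; ring
    rw [hcast]
    exact div_le_div₀ (by positivity) hθωk (by linarith) le_rfl
  have : θ * ω k / k + θ * ω k / (2 * k) = 3 * θ / 2 * (ω k / k) := by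
    field_simp; ring
  calc ω (2 * k - 1) / ((2 * k - 1 : ℕ) : ℝ) + ω (2 * k) / ((2 * k : ℕ) : ℝ)
      ≤ θ * ω k / k + θ * ω k / (2 * k) := add_le_add h1 h2
    _ = 3 * θ / 2 * (ω k / k) := this
end

section
/- Let ω be a nondecreasing positive weight. Then sup_{N≥1} ω̃(N)/ω(N) < ∞ if and only if i_ω > 0, where ω̃(N) = Σ_{n=1}^N ω(n)/n and i_ω = sup_{M>1} ln(φ_ω(M))/ln(M) with φ_ω(M) = inf_{k≥1} ω(Mk)/ω(k). -/
open scoped ENNReal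

/-- φ_ω(M) = inf_{k≥1} ω(Mk)/ω(k). -/
noncomputable def phiDil (ω : ℕ → ℝ) (M : ℕ) : ℝ :=
  sInf {r : ℝ | ∃ k, 1 ≤ k ∧ r = ω (M * k) / ω k}

/-- The lower dilation index i_ω = sup_{M ≥ 2} ln(φ_ω(M))/ln(M), valued in [0,∞]. -/
noncomputable def lowerIndex (ω : ℕ → ℝ) : ℝ≥0∞ :=
  ⨆ M : {M : ℕ // 2 ≤ M}, ENNReal.ofReal (Real.log (phiDil ω M) / Real.log M)

/-!
If ω(Mk) ≥ q ω(k) for all k with q > 1, splitting ω̃(N) at k = ⌊N/M⌋ gives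
ω̃(N) ≤ ω̃(k) + M ω(N) with ω(k) ≤ ω(N)/q, and induction yields ω̃(N) ≤ (Mq/(q-1)) ω(N).
Conversely each block (j, 2j] with j ≥ k contributes at least ω(k)/2 to ω̃, so
ω̃(2^m k) ≥ (m/2) ω(k); a bound ω̃ ≤ C ω therefore forces ω(2^m k) ≥ 2 ω(k) once m ≥ 4C.
Finally i_ω > 0 says exactly that such a uniform dilation factor q > 1 exists for some M ≥ 2.
-/

noncomputable def summingWeight (ω : ℕ → ℝ) (N : ℕ) : ℝ :=
  ∑ n ∈ Finset.Icc 1 N, ω n / n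

section Dilation

variable {ω : ℕ → ℝ} {M : ℕ}

lemma phiDil_nonneg (hpos : ∀ n, 1 ≤ n → 0 < ω n) (hM : 1 ≤ M) : 0 ≤ phiDil ω M :=
  Real.sInf_nonneg fun _ ⟨k, hk, hr⟩ =>
    hr ▸ div_nonneg (hpos _ (one_le_mul hM hk)).le (hpos k hk).le

lemma le_phiDil_iff (hpos : ∀ n, 1 ≤ n → 0 < ω n) (hM : 1 ≤ M) {c : ℝ} :
    c ≤ phiDil ω M ↔ ∀ k, 1 ≤ k → c * ω k ≤ ω (M * k) := by
  have hMk : ∀ k, 1 ≤ k → 0 < ω (M * k) := fun k hk => hpos _ (one_le_mul hM hk)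
  constructor
  · intro hc k hk
    have hbdd : BddBelow {r : ℝ | ∃ k, 1 ≤ k ∧ r = ω (M * k) / ω k} :=
      ⟨0, fun _ ⟨j, hj, hr⟩ => hr ▸ div_nonneg (hMk j hj).le (hpos j hj).le⟩
    exact (le_div_iff₀ (hpos k hk)).1 (hc.trans (csInf_le hbdd ⟨k, hk, rfl⟩))
  · intro hc
    refine le_csInf ⟨_, 1, le_rfl, rfl⟩ fun _ ⟨k, hk, hr⟩ => ?_
    exact hr ▸ (le_div_iff₀ (hpos k hk)).2 (hc k hk)

lemma lowerIndex_pos_iff (hpos : ∀ n, 1 ≤ n → 0 < ω n) :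
    0 < lowerIndex ω ↔ ∃ M q, 2 ≤ M ∧ 1 < q ∧ ∀ k, 1 ≤ k → q * ω k ≤ ω (M * k) := by
  have hφ : 0 < lowerIndex ω ↔ ∃ M, 2 ≤ M ∧ 1 < phiDil ω M := by
    simp only [lowerIndex, lt_iSup_iff, Subtype.exists, ENNReal.ofReal_pos, exists_prop]
    refine exists_congr fun M => and_congr_right fun hM => ?_
    rw [div_pos_iff_of_pos_right (Real.log_pos (by exact_mod_cast hM)),
      Real.log_pos_iff (phiDil_nonneg hpos (by omega))]
  rw [hφ]
  constructor
  · rintro ⟨M, hM, hq⟩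
    exact ⟨M, _, hM, hq, (le_phiDil_iff hpos (by omega)).1 le_rfl⟩
  · rintro ⟨M, q, hM, hq, hstep⟩
    exact ⟨M, hM, hq.trans_le ((le_phiDil_iff hpos (by omega)).2 hstep)⟩

end Dilation

section SummingWeight

variable {ω : ℕ → ℝ}

lemma summingWeight_nonneg (hpos : ∀ n, 1 ≤ n → 0 < ω n) (N : ℕ) : 0 ≤ summingWeight ω N :=
  Finset.sum_nonneg fun n hn => div_nonneg (hpos n (Finset.mem_Icc.1 hn).1).le n.cast_nonneg

lemma summingWeight_add_sum_Ioc {k N : ℕ} (hkN : k ≤ N) :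
    summingWeight ω k + ∑ n ∈ Finset.Ioc k N, ω n / n = summingWeight ω N :=
  Finset.sum_Ioc_consecutive _ k.zero_le hkN

lemma sum_Ioc_div_le (hpos : ∀ n, 1 ≤ n → 0 < ω n) (hmono : ∀ m n, 1 ≤ m → m ≤ n → ω m ≤ ω n)
    (k N : ℕ) : ∑ n ∈ Finset.Ioc k N, ω n / n ≤ (N - k : ℕ) * (ω N / (k + 1)) := by
  have hterm : ∀ n ∈ Finset.Ioc k N, ω n / n ≤ ω N / (k + 1) := by
    intro n hn
    obtain ⟨hkn, hnN⟩ := Finset.mem_Ioc.1 hn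
    exact div_le_div₀ (hpos N (by omega)).le (hmono n N (by omega) hnN) (by positivity)
      (by exact_mod_cast hkn)
  simpa [Nat.card_Ioc] using Finset.sum_le_card_nsmul _ _ _ hterm

lemma half_le_sum_Ioc_two_mul (hpos : ∀ n, 1 ≤ n → 0 < ω n)
    (hmono : ∀ m n, 1 ≤ m → m ≤ n → ω m ≤ ω n) {k j : ℕ} (hk : 1 ≤ k) (hkj : k ≤ j) :
    ω k / 2 ≤ ∑ n ∈ Finset.Ioc j (2 * j), ω n / n := by
  have hterm : ∀ n ∈ Finset.Ioc j (2 * j), ω k / (2 * j : ℕ) ≤ ω n / n := by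
    intro n hn
    obtain ⟨hjn, hn2j⟩ := Finset.mem_Ioc.1 hn
    exact div_le_div₀ (hpos n (by omega)).le (hmono k n hk (by omega))
      (by exact_mod_cast (by omega : 0 < n)) (by exact_mod_cast hn2j)
  have hsum := Finset.card_nsmul_le_sum _ _ _ hterm
  rw [Nat.card_Ioc, show 2 * j - j = j by omega, nsmul_eq_mul] at hsum
  have hj : (j : ℝ) ≠ 0 := by exact_mod_cast (by omega : j ≠ 0)
  calc ω k / 2 = j * (ω k / (2 * j : ℕ)) := by push_cast; field_simp
    _ ≤ _ := hsum

lemma mul_half_le_sum_Ioc_two_pow_mul (hpos : ∀ n, 1 ≤ n → 0 < ω n)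
    (hmono : ∀ m n, 1 ≤ m → m ≤ n → ω m ≤ ω n) {k : ℕ} (hk : 1 ≤ k) (m : ℕ) :
    m / 2 * ω k ≤ ∑ n ∈ Finset.Ioc k (2 ^ m * k), ω n / n := by
  induction m with
  | zero => simp
  | succ m ih =>
    have hk_le : k ≤ 2 ^ m * k := Nat.le_mul_of_pos_left k (by positivity)
    rw [pow_succ', mul_assoc, ← Finset.sum_Ioc_consecutive _ hk_le (by omega)]
    have hblock := half_le_sum_Ioc_two_mul hpos hmono hk hk_le
    push_cast
    linarith

lemma summingWeight_le_of_dilation (hpos : ∀ n, 1 ≤ n → 0 < ω n)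
    (hmono : ∀ m n, 1 ≤ m → m ≤ n → ω m ≤ ω n) {M : ℕ} {q : ℝ} (hM : 2 ≤ M) (hq : 1 < q)
    (hstep : ∀ k, 1 ≤ k → q * ω k ≤ ω (M * k)) (N : ℕ) (hN : 1 ≤ N) :
    summingWeight ω N ≤ M * q / (q - 1) * ω N := by
  set C : ℝ := M * q / (q - 1)
  have hC : C / q + M = C := by
    have : q - 1 ≠ 0 := by linarith
    simp only [C]
    field_simp
    ring
  induction N using Nat.strong_induction_on with
  | _ N ih =>
    have hωN := hpos N hN
    set k := N / M
    have hhead : summingWeight ω k ≤ C * (ω N / q) := by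
      rcases Nat.eq_zero_or_pos k with hk0 | hk
      · rw [hk0, summingWeight, Finset.Icc_eq_empty (by omega), Finset.sum_empty]
        positivity
      have hMk : M * k ≤ N := Nat.mul_div_le N M
      have hωk : ω k ≤ ω N / q := by
        rw [le_div_iff₀ (by linarith), mul_comm]
        exact (hstep k hk).trans (hmono _ N (one_le_mul (by omega) hk) hMk)
      calc summingWeight ω k ≤ C * ω k := ih k (Nat.div_lt_self hN (by omega)) hk
        _ ≤ C * (ω N / q) := by gcongr
    have htail : ∑ n ∈ Finset.Ioc k N, ω n / n ≤ M * ω N := by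
      have hNk : ((N - k : ℕ) : ℝ) ≤ M * (k + 1) := by
        have := Nat.lt_mul_div_succ N (by omega : 0 < M)
        exact_mod_cast (Nat.sub_le N k).trans this.le
      calc _ ≤ ((N - k : ℕ) : ℝ) * (ω N / (k + 1)) := sum_Ioc_div_le hpos hmono k N
        _ ≤ M * (k + 1) * (ω N / (k + 1)) := by gcongr
        _ = M * ω N := by field_simp
    rw [← summingWeight_add_sum_Ioc (Nat.div_le_self N M)]
    calc _ ≤ C * (ω N / q) + M * ω N := add_le_add hhead htail
      _ = (C / q + M) * ω N := by ring
      _ = C * ω N := by rw [hC]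

lemma exists_dilation_of_summingWeight_le (hpos : ∀ n, 1 ≤ n → 0 < ω n)
    (hmono : ∀ m n, 1 ≤ m → m ≤ n → ω m ≤ ω n) {C : ℝ}
    (hC : ∀ N, 1 ≤ N → summingWeight ω N ≤ C * ω N) :
    ∃ M, 2 ≤ M ∧ ∀ k, 1 ≤ k → 2 * ω k ≤ ω (M * k) := by
  have hC1 : 1 ≤ C := by
    have h := hC 1 le_rfl
    simp only [summingWeight, Finset.Icc_self, Finset.sum_singleton, Nat.cast_one, div_one] at h
    exact (le_mul_iff_one_le_left (hpos 1 le_rfl)).1 h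
  set m := ⌈4 * C⌉₊
  have hm : 4 * C ≤ m := Nat.le_ceil _
  refine ⟨2 ^ m, Nat.le_self_pow (Nat.ceil_pos.2 (by linarith)).ne' 2, fun k hk => ?_⟩
  have hMk : k ≤ 2 ^ m * k := Nat.le_mul_of_pos_left k (by positivity)
  have hchain : m / 2 * ω k ≤ C * ω (2 ^ m * k) :=
    calc m / 2 * ω k ≤ ∑ n ∈ Finset.Ioc k (2 ^ m * k), ω n / n :=
          mul_half_le_sum_Ioc_two_pow_mul hpos hmono hk m
      _ ≤ summingWeight ω (2 ^ m * k) := by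
          rw [← summingWeight_add_sum_Ioc hMk]
          linarith [summingWeight_nonneg hpos k]
      _ ≤ C * ω (2 ^ m * k) := hC _ (hk.trans hMk)
  have hscaled : C * (2 * ω k) ≤ C * ω (2 ^ m * k) := by nlinarith [hpos k hk]
  exact le_of_mul_le_mul_left hscaled (by linarith)

end SummingWeight

/-- sup_{N≥1} ω̃(N)/ω(N) < ∞ iff i_ω > 0, for ω nondecreasing positive. -/
theorem stmt6 (ω : ℕ → ℝ) (hpos : ∀ n, 1 ≤ n → 0 < ω n)
    (hmono : ∀ m n, 1 ≤ m → m ≤ n → ω m ≤ ω n) :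
    (∃ C : ℝ, ∀ N : ℕ, 1 ≤ N →
        (∑ n ∈ Finset.Icc 1 N, ω n / n) / ω N ≤ C) ↔ 0 < lowerIndex ω := by
  rw [lowerIndex_pos_iff hpos]
  constructor
  · rintro ⟨C, hC⟩
    obtain ⟨M, hM, hstep⟩ := exists_dilation_of_summingWeight_le hpos hmono
      fun N hN => (div_le_iff₀ (hpos N hN)).1 (hC N hN)
    exact ⟨M, 2, hM, one_lt_two, hstep⟩
  · rintro ⟨M, q, hM, hq, hstep⟩
    exact ⟨_, fun N hN => (div_le_iff₀ (hpos N hN)).2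
      (summingWeight_le_of_dilation hpos hmono hM hq hstep N hN)⟩
end

section
/- Let ω be a nondecreasing positive weight. Then ω has the lower regularity property (∃ α > 0, C > 0 with ω(N) ≥ C(N/k)^α ω(k) for N ≥ k) if and only if the lower dilation index i_ω = sup_{M≥2} ln(φ_ω(M))/ln(M) is strictly positive. Moreover, i_ω = sup{α > 0 : ω ∈ LRP(α)}. -/
/-! The index is approached from both sides through one dilation at a time. If
`q = φ_ω(M)`, then `ω(M k) ≥ q ω(k)`, and iterating along the powers `M^j` gives
`ω ∈ LRP(log_M q)`, so each term `log_M φ_ω(M)` of the supremum is an LRP exponent.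
Conversely, `ω ∈ LRP(α)` with constant `C` gives `φ_ω(M) ≥ C M^α`, i.e.
`log_M φ_ω(M) ≥ α + log_M C`, and `log_M C → 0` as `M → ∞`. -/

open scoped ENNReal

/-- ω ∈ LRP(α): there is C > 0 with ω(N) ≥ C (N/k)^α ω(k) for all N ≥ k ≥ 1. -/
def LRP (ω : ℕ → ℝ) (α : ℝ) : Prop :=
  ∃ C : ℝ, 0 < C ∧ ∀ N k : ℕ, 1 ≤ k → k ≤ N → C * ((N : ℝ) / k) ^ α * ω k ≤ ω N

open Filter Topology

variable {ω : ℕ → ℝ}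

section

variable (hpos : ∀ n, 1 ≤ n → 0 < ω n)
include hpos

lemma phiDil_le_div {M k : ℕ} (hM : 1 ≤ M) (hk : 1 ≤ k) : phiDil ω M ≤ ω (M * k) / ω k := by
  refine csInf_le ⟨0, ?_⟩ ⟨k, hk, rfl⟩
  rintro r ⟨i, hi, rfl⟩
  exact (div_pos (hpos _ (Nat.one_le_iff_ne_zero.2 (by positivity))) (hpos i hi)).le

lemma le_phiDil {M : ℕ} {c : ℝ} (h : ∀ k, 1 ≤ k → c * ω k ≤ ω (M * k)) : c ≤ phiDil ω M := by
  refine le_csInf ⟨_, 1, le_rfl, rfl⟩ ?_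
  rintro r ⟨k, hk, rfl⟩
  exact (le_div_iff₀ (hpos k hk)).2 (h k hk)

lemma phiDil_mul_le {M k : ℕ} (hM : 1 ≤ M) (hk : 1 ≤ k) : phiDil ω M * ω k ≤ ω (M * k) :=
  (le_div_iff₀ (hpos k hk)).1 (phiDil_le_div hpos hM hk)

variable (hmono : ∀ m n, 1 ≤ m → m ≤ n → ω m ≤ ω n)
include hmono

lemma one_le_phiDil {M : ℕ} (hM : 1 ≤ M) : 1 ≤ phiDil ω M :=
  le_phiDil hpos fun k hk => by
    simpa using hmono k (M * k) hk (Nat.le_mul_of_pos_left k hM)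

lemma phiDil_pow_mul_le {M : ℕ} (hM : 1 ≤ M) (j : ℕ) {k : ℕ} (hk : 1 ≤ k) :
    phiDil ω M ^ j * ω k ≤ ω (M ^ j * k) := by
  induction j with
  | zero => simp
  | succ j ih =>
    have hMjk : 1 ≤ M ^ j * k := Nat.mul_pos (Nat.pow_pos hM) hk
    calc phiDil ω M ^ (j + 1) * ω k = phiDil ω M * (phiDil ω M ^ j * ω k) := by ring
      _ ≤ phiDil ω M * ω (M ^ j * k) := by
        gcongr
        exact zero_le_one.trans (one_le_phiDil hpos hmono hM)
      _ ≤ ω (M * (M ^ j * k)) := phiDil_mul_le hpos hM hMjk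
      _ = ω (M ^ (j + 1) * k) := by rw [pow_succ', mul_assoc]

/-- The ratio `N / k` lies between `M ^ j` and `M ^ (j + 1)` for `j = log_M ⌊N / k⌋`, which
costs one factor `M ^ α` in the constant. -/
lemma lrp_of_rpow_pow_mul_le {M : ℕ} (hM : 2 ≤ M) {α : ℝ} (hα : 0 ≤ α)
    (hgrowth : ∀ j k, 1 ≤ k → ((M : ℝ) ^ α) ^ j * ω k ≤ ω (M ^ j * k)) : LRP ω α := by
  have hM0 : (0 : ℝ) < M := by positivity
  refine ⟨((M : ℝ) ^ α)⁻¹, by positivity, fun N k hk hkN => ?_⟩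
  set j := Nat.log M (N / k)
  have hNk : 1 ≤ N / k := (Nat.one_le_div_iff hk).2 hkN
  have hlow : M ^ j * k ≤ N :=
    (Nat.mul_le_mul_right k (Nat.pow_log_le_self M (by omega))).trans (Nat.div_mul_le_self N k)
  have hhigh : (N : ℝ) / k ≤ (M : ℝ) ^ (j + 1) := by
    rw [div_le_iff₀ (by positivity)]
    exact_mod_cast ((Nat.div_lt_iff_lt_mul hk).1 (Nat.lt_pow_succ_log_self hM (N / k))).le
  calc ((M : ℝ) ^ α)⁻¹ * ((N : ℝ) / k) ^ α * ω k
      ≤ ((M : ℝ) ^ α)⁻¹ * ((M : ℝ) ^ (j + 1)) ^ α * ω k := by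
        have := (hpos k hk).le
        gcongr
    _ = ((M : ℝ) ^ α) ^ j * ω k := by
        rw [← Real.rpow_pow_comm hM0.le, pow_succ]
        field_simp
    _ ≤ ω (M ^ j * k) := hgrowth j k hk
    _ ≤ ω N := hmono _ _ (Nat.mul_pos (Nat.pow_pos (by omega)) hk) hlow

lemma lrp_logb_phiDil {M : ℕ} (hM : 2 ≤ M) : LRP ω (Real.logb M (phiDil ω M)) := by
  have hφ := one_le_phiDil hpos hmono (M := M) (by omega)
  have hM1 : (1 : ℝ) < M := by exact_mod_cast hM
  refine lrp_of_rpow_pow_mul_le hpos hmono hM (Real.logb_nonneg hM1 hφ) fun j k hk => ?_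
  rw [Real.rpow_logb (by positivity) hM1.ne' (by positivity)]
  exact phiDil_pow_mul_le hpos hmono (by omega) j hk

end

lemma ofReal_logb_phiDil_le_lowerIndex {M : ℕ} (hM : 2 ≤ M) :
    ENNReal.ofReal (Real.logb M (phiDil ω M)) ≤ lowerIndex ω :=
  le_iSup (fun M : {M : ℕ // 2 ≤ M} => ENNReal.ofReal (Real.logb M (phiDil ω M))) ⟨M, hM⟩

lemma add_logb_le_logb_phiDil (hpos : ∀ n, 1 ≤ n → 0 < ω n) {α C : ℝ} (hC : 0 < C)
    (hL : ∀ N k : ℕ, 1 ≤ k → k ≤ N → C * ((N : ℝ) / k) ^ α * ω k ≤ ω N)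
    {M : ℕ} (hM : 2 ≤ M) : α + Real.logb M C ≤ Real.logb M (phiDil ω M) := by
  have hM1 : (1 : ℝ) < M := by exact_mod_cast hM
  have hM0 : (0 : ℝ) < M := by positivity
  have hφ : C * (M : ℝ) ^ α ≤ phiDil ω M := by
    refine le_phiDil hpos fun k hk => ?_
    have hk0 : (k : ℝ) ≠ 0 := by positivity
    simpa [hk0] using hL (M * k) k hk (Nat.le_mul_of_pos_left k (by omega))
  calc α + Real.logb M C = Real.logb M (C * (M : ℝ) ^ α) := by
        rw [Real.logb_mul hC.ne' (by positivity), Real.logb_rpow hM0 hM1.ne', add_comm]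
    _ ≤ Real.logb M (phiDil ω M) := Real.logb_le_logb_of_le hM1 (by positivity) hφ

lemma ofReal_le_lowerIndex_of_lrp (hpos : ∀ n, 1 ≤ n → 0 < ω n) {α : ℝ} (h : LRP ω α) :
    ENNReal.ofReal α ≤ lowerIndex ω := by
  obtain ⟨C, hC, hL⟩ := h
  have hlim : Tendsto (fun M : ℕ => α + Real.logb M C) atTop (𝓝 α) := by
    simpa [Real.logb] using tendsto_const_nhds.add <| tendsto_const_nhds.div_atTop
      (Real.tendsto_log_atTop.comp tendsto_natCast_atTop_atTop)
  refine le_of_tendsto (ENNReal.tendsto_ofReal hlim) ?_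
  filter_upwards [eventually_ge_atTop 2] with M hM
  exact (ENNReal.ofReal_le_ofReal (add_logb_le_logb_phiDil hpos hC hL hM)).trans
    (ofReal_logb_phiDil_le_lowerIndex hM)

/-- ω has the LRP iff i_ω > 0; moreover i_ω = sup{α > 0 : ω ∈ LRP(α)}. -/
theorem stmt9 (ω : ℕ → ℝ) (hpos : ∀ n, 1 ≤ n → 0 < ω n)
    (hmono : ∀ m n, 1 ≤ m → m ≤ n → ω m ≤ ω n) :
    ((∃ α : ℝ, 0 < α ∧ LRP ω α) ↔ 0 < lowerIndex ω) ∧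
      lowerIndex ω = ⨆ α : {a : ℝ // 0 < a ∧ LRP ω a}, ENNReal.ofReal α := by
  have hindex : lowerIndex ω = ⨆ α : {a : ℝ // 0 < a ∧ LRP ω a}, ENNReal.ofReal α := by
    refine le_antisymm (iSup_le fun ⟨M, hM⟩ => ?_)
      (iSup_le fun ⟨α, _, hα⟩ => ofReal_le_lowerIndex_of_lrp hpos hα)
    change ENNReal.ofReal (Real.logb M (phiDil ω M)) ≤ _
    rcases le_or_gt (Real.logb M (phiDil ω M)) 0 with hle | hlt
    · simp [ENNReal.ofReal_eq_zero.2 hle]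
    · exact le_iSup_of_le (⟨_, hlt, lrp_logb_phiDil hpos hmono hM⟩ : {a : ℝ // 0 < a ∧ LRP ω a})
        le_rfl
  refine ⟨?_, hindex⟩
  rw [hindex, lt_iSup_iff]
  exact ⟨fun ⟨α, hα, hL⟩ => ⟨⟨α, hα, hL⟩, ENNReal.ofReal_pos.2 hα⟩,
    fun ⟨⟨α, hα, hL⟩, _⟩ => ⟨α, hα, hL⟩⟩
end

section
/- For the difference basis norm on finitely supported real sequences, ‖(a_n)‖ = Σ_{n=1}^{N−1} |a_n − a_{n+1}| + |a_N| (where N is beyond the support), the restricted left democracy function satisfies: h_{R,l}(m,u) = 2m if u ≥ 2m, and h_{R,l}(m,u) = 2u − 2m + 1 if m ≤ u < 2m, where h_{R,l}(m,u) is the supremum of ‖1_A‖ over sets A ⊂ {1,…,u} with |A| = m. -/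
/-!
Write `x` for the indicator sequence of `A ⊆ {1,…,u}`; its norm is the finite sum
`∑_{n<u} |x_{n+1} - x_{n+2}|`. For `x_i, x_j ∈ [0,1]` one has both `|x_i - x_j| ≤ x_i + x_j` and
`|x_i - x_j| ≤ (1 - x_i) + (1 - x_j)`. Summing, and using `∑_{n<u} x_{n+1} = m` and
`∑_{n<u} x_{n+2} = m - x_1`, gives `‖1_A‖ ≤ 2m` and `‖1_A‖ ≤ 2u - 2m + 1`.
Both bounds are attained by a block `{1,…,c}` followed by `g` isolated points `c+2, …, c+2g`,
whose norm is `2g` plus one more jump when the block is nonempty: take `c = 0, g = m` when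
`2m ≤ u`, and `c = 2m - u, g = u - m` otherwise.
-/

/-- The difference-basis norm on finitely supported sequences (indexed from 1):
‖(a_n)‖ = Σ_{n≥1} |a_n − a_{n+1}|. -/
noncomputable def dNorm (a : ℕ → ℝ) : ℝ := ∑' n : ℕ, |a (n + 1) - a (n + 2)|

/-- h_{R,l}(m,u): sup of ‖1_A‖ over A ⊆ {1,…,u} with |A| = m. -/
noncomputable def hRl (m u : ℕ) : ℝ :=
  sSup {x : ℝ | ∃ A : Finset ℕ, A.card = m ∧ (∀ n ∈ A, 1 ≤ n ∧ n ≤ u) ∧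
    x = dNorm (fun n => if n ∈ A then (1 : ℝ) else 0)}

open Finset

def indicatorSeq (A : Finset ℕ) (n : ℕ) : ℝ := if n ∈ A then 1 else 0

lemma indicatorSeq_nonneg (A : Finset ℕ) (n : ℕ) : 0 ≤ indicatorSeq A n := by
  unfold indicatorSeq; split_ifs <;> norm_num

lemma indicatorSeq_le_one (A : Finset ℕ) (n : ℕ) : indicatorSeq A n ≤ 1 := by
  unfold indicatorSeq; split_ifs <;> norm_num

lemma dNorm_indicatorSeq_eq_sum {A : Finset ℕ} {N : ℕ} (hA : ∀ a ∈ A, a ≤ N) :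
    dNorm (indicatorSeq A) =
      ∑ n ∈ range N, |indicatorSeq A (n + 1) - indicatorSeq A (n + 2)| := by
  refine tsum_eq_sum fun n hn => ?_
  have hN : N ≤ n := by simpa using hn
  have h1 : n + 1 ∉ A := fun h => by have := hA _ h; omega
  have h2 : n + 2 ∉ A := fun h => by have := hA _ h; omega
  simp [indicatorSeq, h1, h2]

lemma sum_indicatorSeq_succ {A : Finset ℕ} {N : ℕ} (hA : ∀ a ∈ A, 1 ≤ a ∧ a ≤ N) :
    ∑ n ∈ range N, indicatorSeq A (n + 1) = #A := by
  have hsub : A ⊆ Ico 1 (N + 1) := fun a ha => by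
    have := hA a ha; rw [mem_Ico]; omega
  rw [← Nat.Ico_zero_eq_range, sum_Ico_add' (indicatorSeq A), zero_add]
  simp only [indicatorSeq]
  rw [sum_boole, filter_mem_eq_inter, inter_eq_right.2 hsub]

lemma dNorm_indicatorSeq_le {A : Finset ℕ} {u : ℕ} (hA : ∀ a ∈ A, 1 ≤ a ∧ a ≤ u) :
    dNorm (indicatorSeq A) ≤ 2 * #A ∧ dNorm (indicatorSeq A) ≤ 2 * u - 2 * #A + 1 := by
  set x := indicatorSeq A
  have hx0 : ∀ n, 0 ≤ x n := indicatorSeq_nonneg A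
  have hx1 : ∀ n, x n ≤ 1 := indicatorSeq_le_one A
  have hsum₁ : ∑ n ∈ range u, x (n + 1) = #A := sum_indicatorSeq_succ hA
  have hsum₂ : ∑ n ∈ range u, x (n + 2) = #A - x 1 := by
    have hu : ∀ a ∈ A, 1 ≤ a ∧ a ≤ u + 1 := fun a ha => by have := hA a ha; omega
    have := sum_indicatorSeq_succ hu
    rw [sum_range_succ'] at this
    linarith
  rw [dNorm_indicatorSeq_eq_sum fun a ha => (hA a ha).2]
  constructor
  · calc ∑ n ∈ range u, |x (n + 1) - x (n + 2)|
        ≤ ∑ n ∈ range u, (x (n + 1) + x (n + 2)) := by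
          gcongr with n
          exact abs_sub_le_iff.2 ⟨by linarith [hx0 (n + 2)], by linarith [hx0 (n + 1)]⟩
      _ ≤ 2 * #A := by rw [sum_add_distrib, hsum₁, hsum₂]; linarith [hx0 1]
  · calc ∑ n ∈ range u, |x (n + 1) - x (n + 2)|
        ≤ ∑ n ∈ range u, ((1 - x (n + 1)) + (1 - x (n + 2))) := by
          gcongr with n
          exact abs_sub_le_iff.2 ⟨by linarith [hx1 (n + 1)], by linarith [hx1 (n + 2)]⟩
      _ ≤ 2 * u - 2 * #A + 1 := by
          simp only [sum_add_distrib, sum_sub_distrib, hsum₁, hsum₂, sum_const, card_range,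
            nsmul_eq_mul, mul_one]
          linarith [hx1 1]

def blockAndIsolated (c g : ℕ) : Finset ℕ :=
  Icc 1 c ∪ (range g).image fun j => c + 2 * j + 2

lemma mem_blockAndIsolated {c g k : ℕ} :
    k ∈ blockAndIsolated c g ↔ 1 ≤ k ∧ k ≤ c + 2 * g ∧ (k ≤ c ∨ (k - c) % 2 = 0) := by
  simp only [blockAndIsolated, mem_union, mem_Icc, mem_image, mem_range]
  constructor
  · rintro (⟨h1, h2⟩ | ⟨j, hj, rfl⟩) <;> omega
  · rintro ⟨h1, h2, h3⟩
    by_cases hc : k ≤ c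
    · exact Or.inl ⟨h1, hc⟩
    · exact Or.inr ⟨(k - c) / 2 - 1, by omega, by omega⟩

lemma card_blockAndIsolated (c g : ℕ) : #(blockAndIsolated c g) = c + g := by
  have hdisj : Disjoint (Icc 1 c) ((range g).image fun j => c + 2 * j + 2) := by
    simp only [disjoint_left, mem_Icc, mem_image, mem_range]
    rintro _ ⟨-, ha⟩ ⟨j, -, rfl⟩
    omega
  rw [blockAndIsolated, card_union_of_disjoint hdisj, Nat.card_Icc,
    card_image_of_injective _ fun a b h => by omega, card_range]
  omega

/-- The jumps of the indicator are exactly at the pairs `(n+1, n+2)` with `c ≤ n + 1 ≤ c + 2g`,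
except that there is no jump into position `1` when `c = 0`. -/
lemma dNorm_blockAndIsolated (c g : ℕ) :
    dNorm (indicatorSeq (blockAndIsolated c g)) = ((2 * g + min c 1 : ℕ) : ℝ) := by
  rw [dNorm_indicatorSeq_eq_sum (N := c + 2 * g) fun a ha => (mem_blockAndIsolated.1 ha).2.1]
  have hjump : ∀ n ∈ range (c + 2 * g),
      |indicatorSeq (blockAndIsolated c g) (n + 1) - indicatorSeq (blockAndIsolated c g) (n + 2)|
        = if n ∈ Ico (c - 1) (c + 2 * g) then 1 else 0 := by
    intro n _
    simp only [indicatorSeq, mem_blockAndIsolated, mem_Ico]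
    split_ifs <;> first | omega | norm_num
  have hsub : Ico (c - 1) (c + 2 * g) ⊆ range (c + 2 * g) := fun n hn => by
    rw [mem_Ico] at hn; rw [mem_range]; omega
  rw [sum_congr rfl hjump, sum_boole, filter_mem_eq_inter, inter_eq_right.2 hsub, Nat.card_Ico]
  congr 1
  omega

lemma hRl_eq_of_forall_le_of_exists {m u : ℕ} {B : ℝ}
    (hle : ∀ A : Finset ℕ, #A = m → (∀ n ∈ A, 1 ≤ n ∧ n ≤ u) → dNorm (indicatorSeq A) ≤ B)
    (hex : ∃ A : Finset ℕ, #A = m ∧ (∀ n ∈ A, 1 ≤ n ∧ n ≤ u) ∧ dNorm (indicatorSeq A) = B) :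
    hRl m u = B := by
  refine IsGreatest.csSup_eq ⟨?_, ?_⟩
  · obtain ⟨A, hcard, hA, hB⟩ := hex
    exact ⟨A, hcard, hA, hB.symm⟩
  · rintro _ ⟨A, hcard, hA, rfl⟩
    exact hle A hcard hA

lemma exists_blockAndIsolated {m u c g : ℕ} (hcg : c + g = m) (hu : c + 2 * g ≤ u) :
    ∃ A : Finset ℕ, #A = m ∧ (∀ n ∈ A, 1 ≤ n ∧ n ≤ u) ∧
      dNorm (indicatorSeq A) = ((2 * g + min c 1 : ℕ) : ℝ) := by
  refine ⟨blockAndIsolated c g, by rw [card_blockAndIsolated, hcg], fun n hn => ?_,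
    dNorm_blockAndIsolated c g⟩
  have := mem_blockAndIsolated.1 hn
  omega

theorem stmt14_general (m u : ℕ) (hmu : m ≤ u) :
    (2 * m ≤ u → hRl m u = 2 * (m : ℝ)) ∧
      (u < 2 * m → hRl m u = 2 * (u : ℝ) - 2 * (m : ℝ) + 1) := by
  constructor
  · intro h2m
    refine hRl_eq_of_forall_le_of_exists (fun A hcard hA => ?_) ?_
    · simpa [hcard] using (dNorm_indicatorSeq_le hA).1
    · obtain ⟨A, hcard, hA, hnorm⟩ :=
        exists_blockAndIsolated (m := m) (u := u) (c := 0) (g := m) (by omega) (by omega)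
      exact ⟨A, hcard, hA, by rw [hnorm]; simp⟩
  · intro hu2m
    refine hRl_eq_of_forall_le_of_exists (fun A hcard hA => ?_) ?_
    · simpa [hcard] using (dNorm_indicatorSeq_le hA).2
    · obtain ⟨A, hcard, hA, hnorm⟩ :=
        exists_blockAndIsolated (m := m) (u := u) (c := 2 * m - u) (g := u - m)
          (by omega) (by omega)
      refine ⟨A, hcard, hA, ?_⟩
      rw [hnorm, show 2 * (u - m) + min (2 * m - u) 1 = 2 * (u - m) + 1 by omega]
      push_cast [Nat.cast_sub hmu]
      ring

/-- for the difference basis of ℓ₁,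
h_{R,l}(m,u) = 2m if u ≥ 2m, and h_{R,l}(m,u) = 2u − 2m + 1 if m ≤ u < 2m. -/
theorem stmt14 (m u : ℕ) (hm : 1 ≤ m) (hmu : m ≤ u) :
    (2 * m ≤ u → hRl m u = 2 * (m : ℝ)) ∧
      (u < 2 * m → hRl m u = 2 * (u : ℝ) - 2 * (m : ℝ) + 1) :=
  stmt14_general m u hmu
end

section
/- Let S be the modified Schreier norm on finitely supported sequences: ‖x‖_S = sup_{F∈𝓕} Σ_{i∈F} |x_i| where 𝓕 = {F ⊂ ℕ finite : √(min F) ≥ |F|}. For x_{N,M} = Σ_{n=N+1}^{N+M} e_n (the indicator of an interval of length M starting after N), there is an absolute constant C with ‖x_{N,M}‖_S ≤ C·√(N+M) for all M ≥ 1, N ≥ 0. -/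
/-- The modified Schreier norm: ‖x‖_S = sup over admissible finite sets F
(√(min F) ≥ |F|, equivalently √i ≥ |F| for every i ∈ F) of Σ_{i∈F} |x_i|. -/
noncomputable def SNorm (x : ℕ → ℝ) : ℝ :=
  sSup {s : ℝ | ∃ F : Finset ℕ, F.Nonempty ∧
    (∀ i ∈ F, (F.card : ℝ) ≤ Real.sqrt i) ∧ s = ∑ i ∈ F, |x i|}

/-- x_{N,M}: the indicator of the interval {N+1, …, N+M}. -/
def xNM (N M : ℕ) : ℕ → ℝ := fun n => if N + 1 ≤ n ∧ n ≤ N + M then 1 else 0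

/-- ‖x_{N,M}‖_S ≤ C √(N+M) for an absolute constant C. -/
theorem stmt15 :
    ∃ C : ℝ, 0 < C ∧ ∀ M N : ℕ, 1 ≤ M →
      SNorm (xNM N M) ≤ C * Real.sqrt ((N : ℝ) + M) := by
  refine ⟨1, one_pos, fun M N hM => ?_⟩
  have hsq : (0:ℝ) ≤ Real.sqrt ((N : ℝ) + M) := Real.sqrt_nonneg _
  rw [one_mul]
  apply Real.sSup_le _ hsq
  rintro s ⟨F, hFne, hadm, rfl⟩
  by_cases h : ∃ i ∈ F, N + 1 ≤ i ∧ i ≤ N + M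
  · obtain ⟨i, hiF, hi1, hi2⟩ := h
    calc ∑ j ∈ F, |xNM N M j| ≤ ∑ j ∈ F, 1 := by
          apply Finset.sum_le_sum
          intro j _
          simp only [xNM]
          split <;> norm_num
      _ = (F.card : ℝ) := by simp
      _ ≤ Real.sqrt i := hadm i hiF
      _ ≤ Real.sqrt ((N : ℝ) + M) := by
          apply Real.sqrt_le_sqrt
          have : (i : ℝ) ≤ ((N + M : ℕ) : ℝ) := by exact_mod_cast hi2
          simpa using this
  · push_neg at h
    have : ∑ j ∈ F, |xNM N M j| = 0 := by
      apply Finset.sum_eq_zero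
      intro j hj
      simp only [xNM]
      rw [if_neg (fun hc => absurd (h j hj hc.1) (not_lt.2 hc.2))]
      simp
    rw [this]; exact hsq
end

section
/- With the modified Schreier norm ‖x‖_S = sup_{F: √(min F) ≥ |F|} Σ_{i∈F}|x_i|, the vector x_{N,M} (indicator of {N+1,…,N+M}) satisfies ‖x_{N,M}‖_S ≥ M if N ≥ M² − 1, and ‖x_{N,M}‖_S ≥ c·√(N+M) for an absolute constant c > 0 if N ≤ M² − 1. Consequently ‖Σ_{n=1}^N e_n‖_S ≍ √N, so the canonical basis of this space is not democratic. -/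
open Finset

lemma sum_ind (A F : Finset ℕ) :
    ∑ i ∈ F, |if i ∈ A then (1:ℝ) else 0| = ((F ∩ A).card : ℝ) := by
  have : ∀ i, |if i ∈ A then (1:ℝ) else 0| = if i ∈ A then 1 else 0 := by
    intro i; split <;> simp
  simp_rw [this]
  rw [Finset.sum_boole, Finset.filter_mem_eq_inter]

lemma snorm_ind_bdd (A : Finset ℕ) :
    BddAbove {s : ℝ | ∃ F : Finset ℕ, F.Nonempty ∧
      (∀ i ∈ F, (F.card : ℝ) ≤ Real.sqrt i) ∧
      s = ∑ i ∈ F, |if i ∈ A then (1:ℝ) else 0|} := by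
  refine ⟨(A.card : ℝ), ?_⟩
  rintro s ⟨F, -, -, rfl⟩
  rw [sum_ind]
  exact_mod_cast Finset.card_le_card (Finset.inter_subset_right)

lemma le_snorm_ind (A F : Finset ℕ) (hne : F.Nonempty)
    (hadm : ∀ i ∈ F, (F.card : ℝ) ≤ Real.sqrt i) (hFA : F ⊆ A) :
    (F.card : ℝ) ≤ SNorm (fun n => if n ∈ A then (1:ℝ) else 0) := by
  refine le_csSup (snorm_ind_bdd A) ⟨F, hne, hadm, ?_⟩
  rw [sum_ind, Finset.inter_eq_left.mpr hFA]

lemma xNM_eq (N M : ℕ) :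
    xNM N M = fun n => if n ∈ Finset.Icc (N+1) (N+M) then (1:ℝ) else 0 := by
  funext n; simp [xNM, Finset.mem_Icc]

lemma part1 (M N : ℕ) (hM : 1 ≤ M) (h : (M : ℝ) ^ 2 - 1 ≤ N) :
    (M : ℝ) ≤ SNorm (xNM N M) := by
  rw [xNM_eq]
  have hcard : (Finset.Icc (N+1) (N+M)).card = M := by
    rw [Nat.card_Icc]; omega
  have := le_snorm_ind (Finset.Icc (N+1) (N+M)) (Finset.Icc (N+1) (N+M))
    ⟨N+1, by simp [Finset.mem_Icc]; omega⟩ ?_ (subset_rfl)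
  · rwa [hcard] at this
  · intro i hi
    rw [Finset.mem_Icc] at hi
    rw [hcard, Real.le_sqrt (by positivity) (by positivity)]
    have h2 : (N:ℝ) + 1 ≤ i := by exact_mod_cast hi.1
    linarith

lemma part2 (M N : ℕ) (hM : 1 ≤ M) (h : (N : ℝ) ≤ (M : ℝ) ^ 2 - 1) :
    (1/4) * Real.sqrt ((N : ℝ) + M) ≤ SNorm (xNM N M) := by
  have hNM1 : N + 1 ≤ M ^ 2 := by
    have h' : ((N:ℝ)) + 1 ≤ ((M:ℝ))^2 := by linarith
    exact_mod_cast h'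
  rw [xNM_eq]
  rcases le_or_gt (N + M) 16 with hsmall | hbig
  · -- small case: use the singleton {N+M}
    have h1 : (1:ℝ) ≤ SNorm (fun n => if n ∈ Finset.Icc (N+1) (N+M) then (1:ℝ) else 0) := by
      have := le_snorm_ind (Finset.Icc (N+1) (N+M)) {N+M}
        ⟨N+M, Finset.mem_singleton_self _⟩ ?_ ?_
      · simpa using this
      · intro i hi
        rw [Finset.mem_singleton] at hi
        subst hi
        simp only [Finset.card_singleton, Nat.cast_one]
        rw [Real.le_sqrt (by norm_num) (by positivity)]
        have hM' : (1:ℝ) ≤ (M:ℝ) := by exact_mod_cast hM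
        have hN0 : (0:ℝ) ≤ (N:ℝ) := Nat.cast_nonneg N
        push_cast; linarith
      · intro i hi
        rw [Finset.mem_singleton] at hi
        rw [Finset.mem_Icc]; omega
    have hs : Real.sqrt ((N:ℝ) + M) ≤ 4 := by
      rw [show (4:ℝ) = Real.sqrt 16 by
        rw [show (16:ℝ) = 4^2 by norm_num, Real.sqrt_sq (by norm_num)]]
      apply Real.sqrt_le_sqrt
      exact_mod_cast (by exact_mod_cast hsmall : ((N:ℝ) + M ≤ 16))
    linarith
  · -- large case
    set t := Nat.sqrt (N + M) with ht
    set k := t / 2 with hk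
    have ht4 : 4 ≤ t := by
      rw [ht, Nat.le_sqrt]; omega
    have hk2 : 2 ≤ k := by omega
    have htsq : t ^ 2 ≤ N + M := Nat.sqrt_le' _
    have h4k : 4 * k ^ 2 ≤ N + M := by nlinarith [htsq, (by omega : 2 * k ≤ t)]
    have hkM : k ≤ M := by nlinarith [hNM1, h4k]
    have hkNM : k ^ 2 + k ≤ N + M := by nlinarith
    set F := Finset.Icc (N + M - k + 1) (N + M) with hF
    have hcard : F.card = k := by rw [hF, Nat.card_Icc]; omega
    have hsub : F ⊆ Finset.Icc (N+1) (N+M) := by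
      intro i hi
      rw [hF, Finset.mem_Icc] at hi
      rw [Finset.mem_Icc]; omega
    have hne : F.Nonempty := ⟨N+M, by rw [hF, Finset.mem_Icc]; omega⟩
    have hadm : ∀ i ∈ F, (F.card : ℝ) ≤ Real.sqrt i := by
      intro i hi
      rw [hF, Finset.mem_Icc] at hi
      rw [hcard, Real.le_sqrt (by positivity) (by positivity)]
      have : k ^ 2 ≤ i := by omega
      exact_mod_cast this
    have hle := le_snorm_ind _ F hne hadm hsub
    rw [hcard] at hle
    have hub : Real.sqrt ((N:ℝ) + M) ≤ 4 * k := by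
      have hnat : N + M ≤ (4 * k) ^ 2 := by
        have h1 : N + M < (t + 1) * (t + 1) := Nat.lt_succ_sqrt _
        nlinarith [(by omega : t + 1 ≤ 4 * k)]
      rw [show (4 * (k:ℝ)) = Real.sqrt ((4 * k : ℝ)^2) from
        (Real.sqrt_sq (by positivity)).symm]
      apply Real.sqrt_le_sqrt
      exact_mod_cast hnat
    linarith

lemma part3U (N : ℕ) : SNorm (xNM 0 N) ≤ Real.sqrt N := by
  rw [xNM_eq]
  simp only [Nat.zero_add]
  apply Real.sSup_le _ (Real.sqrt_nonneg _)
  rintro s ⟨F, hne, hadm, rfl⟩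
  rw [sum_ind]
  rcases (F ∩ Finset.Icc 1 N).eq_empty_or_nonempty with he | ⟨i, hi⟩
  · rw [he]; simp [Real.sqrt_nonneg]
  · have hiF : i ∈ F := Finset.mem_of_mem_inter_left hi
    have hiN : i ≤ N := (Finset.mem_Icc.mp (Finset.mem_of_mem_inter_right hi)).2
    calc ((F ∩ Finset.Icc 1 N).card : ℝ) ≤ (F.card : ℝ) := by
          exact_mod_cast Finset.card_le_card Finset.inter_subset_left
      _ ≤ Real.sqrt i := hadm i hiF
      _ ≤ Real.sqrt N := Real.sqrt_le_sqrt (by exact_mod_cast hiN)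

/-- lower bounds for ‖x_{N,M}‖_S, the equivalence ‖Σ_{n=1}^N e_n‖_S ≍ √N,
and consequently the canonical basis is not democratic. -/
theorem stmt16 :
    (∀ M N : ℕ, 1 ≤ M → ((M : ℝ) ^ 2 - 1 ≤ N) → (M : ℝ) ≤ SNorm (xNM N M)) ∧
    (∃ c : ℝ, 0 < c ∧ ∀ M N : ℕ, 1 ≤ M → ((N : ℝ) ≤ (M : ℝ) ^ 2 - 1) →
      c * Real.sqrt ((N : ℝ) + M) ≤ SNorm (xNM N M)) ∧
    (∃ c C : ℝ, 0 < c ∧ ∀ N : ℕ, 1 ≤ N →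
      c * Real.sqrt N ≤ SNorm (xNM 0 N) ∧ SNorm (xNM 0 N) ≤ C * Real.sqrt N) ∧
    ¬ (∃ C : ℝ, 0 < C ∧ ∀ A B : Finset ℕ, (∀ n ∈ A, 1 ≤ n) → (∀ n ∈ B, 1 ≤ n) →
        A.card ≤ B.card →
        SNorm (fun n => if n ∈ A then (1 : ℝ) else 0) ≤
          C * SNorm (fun n => if n ∈ B then (1 : ℝ) else 0)) := by
  refine ⟨part1, ⟨1/4, by norm_num, part2⟩, ⟨1/4, 1, by norm_num, ?_⟩, ?_⟩
  · intro N hN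
    constructor
    · have h0 : ((0:ℕ) : ℝ) ≤ (N : ℝ) ^ 2 - 1 := by
        have : (1:ℝ) ≤ (N:ℝ) := by exact_mod_cast hN
        push_cast; nlinarith
      have := part2 N 0 hN h0
      simpa using this
    · simpa using part3U N
  · rintro ⟨C, hC, h⟩
    set N : ℕ := ⌈C^2⌉₊ + 1 with hNdef
    have hN1 : 1 ≤ N := by omega
    have hCN : C < Real.sqrt N := by
      rw [show C = Real.sqrt (C^2) from (Real.sqrt_sq hC.le).symm]
      apply Real.sqrt_lt_sqrt (by positivity)
      have h1 : (C^2) ≤ (⌈C^2⌉₊ : ℝ) := Nat.le_ceil _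
      have : ((⌈C^2⌉₊ : ℝ)) + 1 = (N : ℝ) := by rw [hNdef]; push_cast; ring
      linarith
    set P : ℕ := N^2 - 1 with hPdef
    have hP : P + 1 = N^2 := by
      rw [hPdef]; exact Nat.sub_add_cancel (Nat.one_le_pow _ _ (by omega))
    have key := h (Finset.Icc (P+1) (P+N)) (Finset.Icc 1 N) ?_ ?_ ?_
    · have hPr : (P : ℝ) + 1 = (N : ℝ)^2 := by exact_mod_cast hP
      have hA : (N:ℝ) ≤ SNorm (fun n => if n ∈ Finset.Icc (P+1) (P+N) then (1:ℝ) else 0) := by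
        rw [← xNM_eq]
        exact part1 N P hN1 (by linarith)
      have hB : SNorm (fun n => if n ∈ Finset.Icc 1 N then (1:ℝ) else 0) ≤ Real.sqrt N := by
        have := part3U N
        rw [xNM_eq] at this; simpa using this
      have hsq : Real.sqrt N * Real.sqrt N = (N:ℝ) :=
        Real.mul_self_sqrt (by positivity)
      have hpos : 0 < Real.sqrt N := lt_of_le_of_lt hC.le hCN
      have : C * SNorm (fun n => if n ∈ Finset.Icc 1 N then (1:ℝ) else 0)
          ≤ C * Real.sqrt N := by
        apply mul_le_mul_of_nonneg_left hB hC.le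
      have hlt : C * Real.sqrt N < Real.sqrt N * Real.sqrt N :=
        mul_lt_mul_of_pos_right hCN hpos
      linarith
    · intro n hn; rw [Finset.mem_Icc] at hn; omega
    · intro n hn; rw [Finset.mem_Icc] at hn; omega
    · rw [Nat.card_Icc, Nat.card_Icc]; omega
end

section
/- If a basis (e_n) of a p-Banach space is C_sc-super-conservative, then it has the 2^{1/p}·C_sc-Property (W): for all n ∈ ℕ and all m ≥ n there exist a set A ⊂ {m+1, m+2, …} with |A| = n and signs ε such that h_r(n) ≤ 2^{1/p}·C_sc·‖1_{εA}‖, where h_r(n) = sup{‖1_{εB}‖ : |B| ≤ n, |ε| = 1}. -/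
/-- h_r(n) = sup{‖1_{εB}‖ : |B| ≤ n, |ε| = 1}. -/
noncomputable def hr {X : Type*} [AddCommGroup X] [Module ℝ X]
    (Nm : X → ℝ) (e : ℕ → X) (n : ℕ) : ℝ :=
  sSup {x : ℝ | ∃ (B : Finset ℕ) (ε : ℕ → ℝ), B.card ≤ n ∧
    (∀ j ∈ B, 1 ≤ j) ∧ (∀ j ∈ B, |ε j| = 1) ∧
    x = Nm (∑ j ∈ B, ε j • e j)}

/-!
Fix `K > 1` (here `K = 2^{1/p}`). Some `1_{δB}` with `|B| ≤ n` has `h_r(n) ≤ K‖1_{δB}‖`, and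
super-conservativity moves `B` to the block of `n` consecutive indices just beyond
`max(m, max B)`, at the cost of the factor `C_sc`.
-/

/-- If `S` is not bounded above then `sSup S = 0` and every `x ∈ S` works. -/
lemma Real.exists_mem_sSup_le_mul {S : Set ℝ} {K : ℝ} (hne : S.Nonempty)
    (hnonneg : ∀ x ∈ S, 0 ≤ x) (hK : 1 < K) : ∃ x ∈ S, sSup S ≤ K * x := by
  obtain ⟨y, hy⟩ := hne
  rcases le_or_gt (sSup S) 0 with hle | hpos
  · exact ⟨y, hy, hle.trans (mul_nonneg (by linarith) (hnonneg y hy))⟩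
  · obtain ⟨x, hx, hlt⟩ := exists_lt_of_lt_csSup ⟨y, hy⟩ (div_lt_self hpos hK)
    exact ⟨x, hx, ((div_lt_iff₀' (by linarith)).mp hlt).le⟩

section SignSums

variable {X : Type*} [AddCommGroup X] [Module ℝ X] (Nm : X → ℝ) (e : ℕ → X)

def signSums (n : ℕ) : Set ℝ :=
  {x : ℝ | ∃ (B : Finset ℕ) (ε : ℕ → ℝ), B.card ≤ n ∧
    (∀ j ∈ B, 1 ≤ j) ∧ (∀ j ∈ B, |ε j| = 1) ∧
    x = Nm (∑ j ∈ B, ε j • e j)}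

def IsSuperConservative (C : ℝ) : Prop :=
  ∀ (A B : Finset ℕ) (ε δ : ℕ → ℝ),
    (∀ n ∈ A, 1 ≤ n) → (∀ n ∈ B, 1 ≤ n) → A.card ≤ B.card →
    (∀ a ∈ A, ∀ b ∈ B, a < b) →
    (∀ n ∈ A, |ε n| = 1) → (∀ n ∈ B, |δ n| = 1) →
    Nm (∑ n ∈ A, ε n • e n) ≤ C * Nm (∑ n ∈ B, δ n • e n)

variable {Nm e}

lemma signSums_nonempty (n : ℕ) : (signSums Nm e n).Nonempty :=
  ⟨_, ∅, 0, by simp, by simp, by simp, rfl⟩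

/-- Property (W) with constant `K * C` for every `K > 1`. -/
theorem IsSuperConservative.exists_hr_le_mul {C K : ℝ} (hsc : IsSuperConservative Nm e C)
    (hN0 : ∀ x, 0 ≤ Nm x) (hK : 1 < K) (n m : ℕ) :
    ∃ (A : Finset ℕ) (ε : ℕ → ℝ), A.card = n ∧ (∀ j ∈ A, m < j) ∧
      (∀ j ∈ A, |ε j| = 1) ∧ hr Nm e n ≤ K * C * Nm (∑ j ∈ A, ε j • e j) := by
  obtain ⟨_, ⟨B, δ, hB, hB1, hδ, rfl⟩, hr_le⟩ := Real.exists_mem_sSup_le_mul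
    (signSums_nonempty n) (by rintro _ ⟨B, δ, -, -, -, rfl⟩; exact hN0 _) hK
  set M := max m (B.sup id)
  have hBM : ∀ b ∈ B, b ≤ M := fun b hb ↦ (Finset.le_sup (f := id) hb).trans (le_max_right _ _)
  refine ⟨Finset.Ioc M (M + n), fun _ ↦ 1, by simp,
    fun j hj ↦ (le_max_left _ _).trans_lt (Finset.mem_Ioc.mp hj).1, fun _ _ ↦ abs_one, ?_⟩
  have hmove := hsc B (Finset.Ioc M (M + n)) δ (fun _ ↦ 1) hB1
    (fun j hj ↦ by have := (Finset.mem_Ioc.mp hj).1; omega) (by simpa using hB)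
    (fun a ha b hb ↦ (hBM a ha).trans_lt (Finset.mem_Ioc.mp hb).1) hδ (fun _ _ ↦ abs_one)
  calc hr Nm e n ≤ K * Nm (∑ j ∈ B, δ j • e j) := hr_le
    _ ≤ K * (C * Nm (∑ j ∈ Finset.Ioc M (M + n), (1 : ℝ) • e j)) := by gcongr
    _ = K * C * Nm (∑ j ∈ Finset.Ioc M (M + n), (1 : ℝ) • e j) := by ring

end SignSums

theorem stmt19_general {X : Type*} [AddCommGroup X] [Module ℝ X]
    (Nm : X → ℝ) (p : ℝ) (hp0 : 0 < p)
    (hN0 : ∀ x, 0 ≤ Nm x)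
    (e : ℕ → X)
    (Csc : ℝ)
    (hsc : ∀ (A B : Finset ℕ) (ε δ : ℕ → ℝ),
      (∀ n ∈ A, 1 ≤ n) → (∀ n ∈ B, 1 ≤ n) → A.card ≤ B.card →
      (∀ a ∈ A, ∀ b ∈ B, a < b) →
      (∀ n ∈ A, |ε n| = 1) → (∀ n ∈ B, |δ n| = 1) →
      Nm (∑ n ∈ A, ε n • e n) ≤ Csc * Nm (∑ n ∈ B, δ n • e n)) :
    ∀ n m : ℕ, n ≤ m →
      ∃ (A : Finset ℕ) (ε : ℕ → ℝ), A.card = n ∧ (∀ j ∈ A, m < j) ∧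
        (∀ j ∈ A, |ε j| = 1) ∧
        hr Nm e n ≤ (2 : ℝ) ^ (1 / p) * Csc * Nm (∑ j ∈ A, ε j • e j) := by
  intro n m _
  have hK : (1 : ℝ) < 2 ^ (1 / p) := Real.one_lt_rpow one_lt_two (by positivity)
  exact IsSuperConservative.exists_hr_le_mul hsc hN0 hK n m

/-- a C_sc-super-conservative basis of a p-Banach space has the
2^{1/p}·C_sc-Property (W). -/
theorem stmt19 {X : Type*} [AddCommGroup X] [Module ℝ X]
    (Nm : X → ℝ) (p : ℝ) (hp0 : 0 < p) (hp1 : p ≤ 1)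
    (hN0 : ∀ x, 0 ≤ Nm x)
    (hhom : ∀ (t : ℝ) (x : X), Nm (t • x) = |t| * Nm x)
    (htri : ∀ x y : X, Nm (x + y) ^ p ≤ Nm x ^ p + Nm y ^ p)
    (e : ℕ → X)
    (hsn : ∃ c₁ c₂ : ℝ, 0 < c₁ ∧ ∀ n, c₁ ≤ Nm (e n) ∧ Nm (e n) ≤ c₂)
    (Csc : ℝ) (hCsc : 0 < Csc)
    (hsc : ∀ (A B : Finset ℕ) (ε δ : ℕ → ℝ),
      (∀ n ∈ A, 1 ≤ n) → (∀ n ∈ B, 1 ≤ n) → A.card ≤ B.card →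
      (∀ a ∈ A, ∀ b ∈ B, a < b) →
      (∀ n ∈ A, |ε n| = 1) → (∀ n ∈ B, |δ n| = 1) →
      Nm (∑ n ∈ A, ε n • e n) ≤ Csc * Nm (∑ n ∈ B, δ n • e n)) :
    ∀ n m : ℕ, n ≤ m →
      ∃ (A : Finset ℕ) (ε : ℕ → ℝ), A.card = n ∧ (∀ j ∈ A, m < j) ∧
        (∀ j ∈ A, |ε j| = 1) ∧
        hr Nm e n ≤ (2 : ℝ) ^ (1 / p) * Csc * Nm (∑ j ∈ A, ε j • e j) :=
  stmt19_general Nm p hp0 hN0 e Csc hsc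
end
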